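/- For positive n ≥ 3 and S ⊆ [n], the subcomplex (K_{B_n})_S of K_{B_n} (spanned by admissible subsets I of [±n] such that |(I ∪ -I) ∩ S| is odd) is homotopy equivalent to the full subcomplex (K_{B_n})'_S obtained from (K_{B_n})_S by deleting all vertices I with (I ∪ -I) ∩ [n] ⊄ S. -/

import Mathlib

open scoped Classical

/-- An admissible subset `I` of `[±n] = {±1, …, ±n}` (nonempty, with `i ∈ I → -i ∉ I`),
encoded as a function `Fin n → Option Bool`: `some true` at `i` means `i+1 ∈ I`,
`some false` means `-(i+1) ∈ I`, and `none` means neither. -/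
def Adm (n : ℕ) : Type := {f : Fin n → Option Bool // f ≠ fun _ => none}

/-- Admissible subsets are ordered by inclusion. -/
instance (n : ℕ) : PartialOrder (Adm n) where
  le f g := ∀ i b, f.1 i = some b → g.1 i = some b
  le_refl f i b h := h
  le_trans f g h hfg hgh i b hi := hgh i b (hfg i b hi)
  le_antisymm := by
    rintro ⟨f, hf⟩ ⟨g, hg⟩ hfg hgf
    refine Subtype.ext (funext fun i => ?_)
    show f i = g i
    rcases hfi : f i with _ | b
    · rcases hgi : g i with _ | b
      · rfl
      · exact absurd (hgf i b hgi) (by show ¬ f i = some b; rw [hfi]; simp)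
    · exact (hfg i b hfi).symm

noncomputable instance (n : ℕ) : Fintype (Adm n) := by
  unfold Adm; exact Subtype.fintype _

/-- The number of elements of the admissible set (the cardinality `|I|`). -/
noncomputable def Adm.size {n : ℕ} (f : Adm n) : ℕ :=
  (Finset.univ.filter fun i => f.1 i ≠ none).card

/-- `I^± = (I ∪ -I) ∩ [n]`, as a subset of `Fin n`. -/
noncomputable def Adm.supp {n : ℕ} (f : Adm n) : Finset (Fin n) :=
  Finset.univ.filter fun i => f.1 i ≠ none

/-- The faces of the order complex on the vertices satisfying `P`:
finite chains (under inclusion) of admissible sets satisfying `P`. -/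
def chainComplex {n : ℕ} (P : Adm n → Prop) : Set (Finset (Adm n)) :=
  {σ | (∀ I ∈ σ, P I) ∧ IsChain (· ≤ ·) (σ : Set (Adm n))}

/-- Geometric realization of an abstract simplicial complex with (finite) vertex
set `V`: the set of convex weight functions whose support is a face. -/
def realization {V : Type} [Fintype V] (K : Set (Finset V)) : Set (V → ℝ) :=
  {f | (∀ v, 0 ≤ f v) ∧ (∑ v, f v) = 1 ∧ (Finset.univ.filter fun v => f v ≠ 0) ∈ K}


/-!
Restriction `I ↦ I ∩ (S ∪ -S)` is a map `r` of the vertex poset with `r I ≤ I`, monotone on the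
vertices of `(K_{B_n})_S`, preserving `I^± ∩ S` (so mapping `(K_{B_n})_S` into `(K_{B_n})'_S`) and
fixing `(K_{B_n})'_S`. Any such map of a finite poset deformation retracts the realization of the
order complex onto the smaller one: a point is a weight function supported on a chain, and its
weights are moved from each `x` to `r x` one vertex after the other, from the bottom of the chain
up. At each moment the support stays a chain, since a vertex `b` that has started moving lies
below every vertex `a` that has not finished, whence `r b ≤ b ≤ a`.
-/

theorem MonotoneOn.isChain_image {α β : Type*} [Preorder α] [Preorder β] {f : α → β}
    {s : Set α} (hf : MonotoneOn f s) (hs : IsChain (· ≤ ·) s) : IsChain (· ≤ ·) (f '' s) := by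
  rintro _ ⟨x, hx, rfl⟩ _ ⟨y, hy, rfl⟩ -
  exact (hs.total hx hy).imp (hf hx hy) (hf hy hx)

theorem isChain_union_image {α : Type*} [PartialOrder α] {σ A B : Set α} {r : α → α}
    (hσ : IsChain (· ≤ ·) σ) (hA : A ⊆ σ) (hB : B ⊆ σ) (hr_le : ∀ x ∈ B, r x ≤ x)
    (hr_mono : MonotoneOn r B) (hAB : ∀ a ∈ A, ∀ b ∈ B, ¬ a < b) :
    IsChain (· ≤ ·) (A ∪ r '' B) := by
  refine isChain_union.2 ⟨hσ.mono hA, hr_mono.isChain_image (hσ.mono hB), ?_⟩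
  rintro a ha _ ⟨b, hb, rfl⟩ -
  right
  rcases hσ.total (hA ha) (hB hb) with h | h
  · exact (hr_le b hb).trans (h.eq_of_not_lt (hAB a ha b hb)).ge
  · exact (hr_le b hb).trans h

open Finset

section OrderComplex

variable {α : Type} [PartialOrder α]

def orderComplex (P : α → Prop) : Set (Finset α) :=
  {σ | (∀ x ∈ σ, P x) ∧ IsChain (· ≤ ·) (σ : Set α)}

theorem mem_orderComplex_of_subset {P : α → Prop} {σ τ : Finset α} (h : σ ⊆ τ)
    (hτ : τ ∈ orderComplex P) : σ ∈ orderComplex P :=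
  ⟨fun x hx => hτ.1 x (h hx), hτ.2.mono (by exact_mod_cast h)⟩

theorem realization_orderComplex_mono [Fintype α] {P Q : α → Prop} (h : ∀ x, Q x → P x) :
    realization (orderComplex Q) ⊆ realization (orderComplex P) :=
  fun _ ⟨h0, h1, hσQ, hσ⟩ => ⟨h0, h1, fun x hx => h x (hσQ x hx), hσ⟩

end OrderComplex

section Weights

variable {α : Type} [Fintype α]

noncomputable def pushWeights (r : α → α) (f : α → ℝ) (y : α) : ℝ :=
  ∑ x ∈ univ.filter (r · = y), f x

variable {f : α → ℝ} {r : α → α}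

theorem sum_pushWeights (r : α → α) (f : α → ℝ) : ∑ y, pushWeights r f y = ∑ x, f x :=
  sum_fiberwise univ r f

theorem pushWeights_nonneg (hf : ∀ x, 0 ≤ f x) (r : α → α) (y : α) : 0 ≤ pushWeights r f y :=
  sum_nonneg fun x _ => hf x

theorem exists_ne_zero_of_pushWeights_ne_zero {y : α} (h : pushWeights r f y ≠ 0) :
    ∃ x, f x ≠ 0 ∧ r x = y := by
  obtain ⟨x, hx, hfx⟩ := exists_ne_zero_of_sum_ne_zero h
  exact ⟨x, hfx, (mem_filter.1 hx).2⟩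

theorem pushWeights_eq_self (h : ∀ x, f x ≠ 0 → r x = x) : pushWeights r f = f := by
  funext y
  refine sum_eq_single y (fun x hx hxy => ?_) (fun hy => ?_)
  · by_contra hfx
    exact hxy ((h x hfx).symm.trans (mem_filter.1 hx).2)
  · by_contra hfy
    exact hy (mem_filter.2 ⟨mem_univ y, h y hfy⟩)

variable [PartialOrder α]

theorem pushWeights_mem_realization {P Q : α → Prop} (hrQ : ∀ x, P x → Q (r x))
    (hr : MonotoneOn r {x | P x}) (hf : f ∈ realization (orderComplex P)) :
    pushWeights r f ∈ realization (orderComplex Q) := by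
  obtain ⟨hf0, hf1, hσP, hσ⟩ := hf
  refine ⟨pushWeights_nonneg hf0 r, by rw [sum_pushWeights, hf1],
    mem_orderComplex_of_subset (τ := (univ.filter fun x => f x ≠ 0).image r) ?_ ⟨?_, ?_⟩⟩
  · intro y hy
    obtain ⟨x, hx, rfl⟩ := exists_ne_zero_of_pushWeights_ne_zero (mem_filter.1 hy).2
    exact mem_image_of_mem r (mem_filter.2 ⟨mem_univ x, hx⟩)
  · simp only [forall_mem_image]
    exact fun x hx => hrQ x (hσP x hx)
  · rw [coe_image]
    exact (hr.mono fun x hx => hσP x hx).isChain_image hσ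

noncomputable def weightBelow (f : α → ℝ) (x : α) : ℝ :=
  ∑ y ∈ univ.filter (· < x), f y

/-- Lay the weights of a chain end to end on `[0, 1]`, with `x` occupying
`[weightBelow f x, weightBelow f x + f x]`: this is the length of the part of that interval
to the left of `t`. -/
noncomputable def shiftedWeight (f : α → ℝ) (t : ℝ) (x : α) : ℝ :=
  min (f x) (max 0 (t - weightBelow f x))

theorem weightBelow_add_le (hf : ∀ x, 0 ≤ f x) {x : α} {s : Finset α} (hs : ∀ y ≤ x, y ∈ s) :
    weightBelow f x + f x ≤ ∑ y ∈ s, f y := by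
  rw [weightBelow, add_comm, ← sum_insert (s := univ.filter (· < x)) (by simp)]
  refine sum_le_sum_of_subset_of_nonneg (fun y hy => ?_) fun y _ _ => hf y
  rcases mem_insert.1 hy with rfl | hy
  · exact hs y le_rfl
  · exact hs y (mem_filter.1 hy).2.le

theorem shiftedWeight_nonneg (hf : ∀ x, 0 ≤ f x) (t : ℝ) (x : α) : 0 ≤ shiftedWeight f t x :=
  le_min (hf x) (le_max_left _ _)

theorem shiftedWeight_le (t : ℝ) (x : α) : shiftedWeight f t x ≤ f x :=
  min_le_left _ _

theorem shiftedWeight_zero (hf : ∀ x, 0 ≤ f x) : shiftedWeight f 0 = 0 := by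
  funext x
  have : 0 ≤ weightBelow f x := sum_nonneg fun y _ => hf y
  simp [shiftedWeight, hf x, this]

theorem shiftedWeight_one (hf : ∀ x, 0 ≤ f x) (h1 : ∑ x, f x = 1) : shiftedWeight f 1 = f := by
  funext x
  have := weightBelow_add_le hf (x := x) (s := univ) fun y _ => mem_univ y
  rw [h1] at this
  exact min_eq_left (le_max_of_le_right (by linarith))

theorem shiftedWeight_eq_of_lt (hf : ∀ x, 0 ≤ f x) {t : ℝ} {x y : α} (hxy : x < y)
    (hy : 0 < shiftedWeight f t y) : shiftedWeight f t x = f x := by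
  have hbelow : weightBelow f x + f x ≤ weightBelow f y :=
    weightBelow_add_le hf fun z hz => mem_filter.2 ⟨mem_univ z, hz.trans_lt hxy⟩
  have ht : weightBelow f y < t := by
    by_contra! h
    have : shiftedWeight f t y ≤ 0 := (min_le_right _ _).trans (max_le le_rfl (by linarith))
    linarith
  exact min_eq_left (le_max_of_le_right (by linarith))

noncomputable def slideWeights (r : α → α) (f : α → ℝ) (t : ℝ) (y : α) : ℝ :=
  f y - shiftedWeight f t y + pushWeights r (shiftedWeight f t) y

theorem slideWeights_nonneg (hf : ∀ x, 0 ≤ f x) (r : α → α) (t : ℝ) (y : α) :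
    0 ≤ slideWeights r f t y :=
  add_nonneg (sub_nonneg.2 (shiftedWeight_le t y))
    (pushWeights_nonneg (shiftedWeight_nonneg hf t) r y)

theorem sum_slideWeights (r : α → α) (h1 : ∑ x, f x = 1) (t : ℝ) :
    ∑ y, slideWeights r f t y = 1 := by
  simp only [slideWeights, sum_add_distrib, sum_sub_distrib, sum_pushWeights, h1]
  ring

theorem slideWeights_zero (hf : ∀ x, 0 ≤ f x) : slideWeights r f 0 = f := by
  funext y
  simp [slideWeights, shiftedWeight_zero hf, pushWeights]

theorem slideWeights_one (hf : ∀ x, 0 ≤ f x) (h1 : ∑ x, f x = 1) :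
    slideWeights r f 1 = pushWeights r f := by
  funext y
  simp [slideWeights, shiftedWeight_one hf h1]

theorem support_slideWeights_subset (hf : ∀ x, 0 ≤ f x) (r : α → α) (t : ℝ) :
    univ.filter (fun y => slideWeights r f t y ≠ 0) ⊆
      univ.filter (fun y => shiftedWeight f t y < f y) ∪
        (univ.filter fun x => 0 < shiftedWeight f t x).image r := by
  intro y hy
  rcases (shiftedWeight_le t y).lt_or_eq with hlt | heq
  · exact mem_union_left _ (mem_filter.2 ⟨mem_univ y, hlt⟩)
  · have hpush : pushWeights r (shiftedWeight f t) y ≠ 0 := by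
      simpa [slideWeights, heq] using (mem_filter.1 hy).2
    obtain ⟨x, hx, rfl⟩ := exists_ne_zero_of_pushWeights_ne_zero hpush
    exact mem_union_right _ (mem_image_of_mem r
      (mem_filter.2 ⟨mem_univ x, (shiftedWeight_nonneg hf t x).lt_of_ne' hx⟩))

theorem slideWeights_mem_realization {P : α → Prop} (hrP : ∀ x, P x → P (r x))
    (hr_le : ∀ x, P x → r x ≤ x) (hr_mono : MonotoneOn r {x | P x})
    (hf : f ∈ realization (orderComplex P)) (t : ℝ) :
    slideWeights r f t ∈ realization (orderComplex P) := by
  obtain ⟨hf0, hf1, hσP, hσ⟩ := hf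
  set A := univ.filter fun y => shiftedWeight f t y < f y
  set B := univ.filter fun x => 0 < shiftedWeight f t x
  have hA : A ⊆ univ.filter fun x => f x ≠ 0 := fun y hy => mem_filter.2
    ⟨mem_univ y, ((shiftedWeight_nonneg hf0 t y).trans_lt (mem_filter.1 hy).2).ne'⟩
  have hB : B ⊆ univ.filter fun x => f x ≠ 0 := fun x hx => mem_filter.2
    ⟨mem_univ x, ((mem_filter.1 hx).2.trans_le (shiftedWeight_le t x)).ne'⟩
  refine ⟨slideWeights_nonneg hf0 r t, sum_slideWeights r hf1 t,
    mem_orderComplex_of_subset (support_slideWeights_subset hf0 r t) ⟨?_, ?_⟩⟩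
  · intro y hy
    rcases mem_union.1 hy with hy | hy
    · exact hσP y (hA hy)
    · obtain ⟨x, hx, rfl⟩ := mem_image.1 hy
      exact hrP x (hσP x (hB hx))
  · rw [coe_union, coe_image]
    -- a vertex of `B` has started moving, so everything strictly below it has finished
    exact isChain_union_image hσ (coe_subset.2 hA) (coe_subset.2 hB)
      (fun x hx => hr_le x (hσP x (hB hx))) (hr_mono.mono fun x hx => hσP x (hB hx))
      fun a ha b hb hab =>
        (mem_filter.1 ha).2.ne (shiftedWeight_eq_of_lt hf0 hab (mem_filter.1 hb).2)

theorem continuous_slideWeights (r : α → α) :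
    Continuous fun p : (α → ℝ) × ℝ => slideWeights r p.1 p.2 := by
  unfold slideWeights pushWeights shiftedWeight weightBelow
  fun_prop

end Weights

theorem nonempty_homotopyEquiv_of_retraction {α : Type} [PartialOrder α] [Fintype α]
    {P Q : α → Prop} {r : α → α} (hQP : ∀ x, Q x → P x) (hrQ : ∀ x, P x → Q (r x))
    (hr_fix : ∀ x, Q x → r x = x) (hr_le : ∀ x, P x → r x ≤ x)
    (hr_mono : MonotoneOn r {x | P x}) :
    Nonempty (ContinuousMap.HomotopyEquiv
      (realization (orderComplex P)) (realization (orderComplex Q))) := by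
  let retract : C(realization (orderComplex P), realization (orderComplex Q)) :=
    ⟨fun f => ⟨pushWeights r f, pushWeights_mem_realization hrQ hr_mono f.2⟩, by
      unfold pushWeights; fun_prop⟩
  let incl : C(realization (orderComplex Q), realization (orderComplex P)) :=
    ⟨fun g => ⟨g, realization_orderComplex_mono hQP g.2⟩, by fun_prop⟩
  let slide : (ContinuousMap.id _).Homotopy (incl.comp retract) :=
    { toFun p := ⟨slideWeights r p.2 p.1, slideWeights_mem_realization
        (fun x hx => hQP _ (hrQ x hx)) hr_le hr_mono p.2.2 p.1⟩
      continuous_toFun := by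
        have := continuous_slideWeights r
        fun_prop
      map_zero_left f := Subtype.ext (by simpa using slideWeights_zero f.2.1)
      map_one_left f := Subtype.ext (by simp [retract, incl, slideWeights_one f.2.1 f.2.2.1]) }
  have retract_incl : retract.comp incl = ContinuousMap.id _ :=
    ContinuousMap.ext fun g => Subtype.ext <| pushWeights_eq_self fun x hx =>
      hr_fix x (g.2.2.2.1 x (mem_filter.2 ⟨mem_univ x, hx⟩))
  exact ⟨⟨retract, incl, ⟨slide.symm⟩, retract_incl ▸ .refl _⟩⟩

namespace Adm

variable {n : ℕ}

theorem mem_supp {I : Adm n} {i : Fin n} : i ∈ I.supp ↔ I.1 i ≠ none := by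
  simp [supp]

/-- `I ∩ (S ∪ -S)`, with the junk value `I` when this is empty. -/
noncomputable def restrict (S : Finset (Fin n)) (I : Adm n) : Adm n :=
  if h : (fun i => if i ∈ S then I.1 i else none) ≠ fun _ => none then ⟨_, h⟩ else I

theorem restrict_val {S : Finset (Fin n)} {I : Adm n} (h : (I.supp ∩ S).Nonempty) (i : Fin n) :
    (I.restrict S).1 i = if i ∈ S then I.1 i else none := by
  obtain ⟨j, hj⟩ := h
  rw [mem_inter, mem_supp] at hj
  have hne : (fun i => if i ∈ S then I.1 i else none) ≠ fun _ => none := fun h =>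
    hj.1 (by simpa [hj.2] using congrFun h j)
  rw [show I.restrict S = ⟨_, hne⟩ from dif_pos hne]

theorem restrict_le (S : Finset (Fin n)) (I : Adm n) : I.restrict S ≤ I := by
  by_cases hne : (fun i => if i ∈ S then I.1 i else none) ≠ fun _ => none
  · rw [show I.restrict S = ⟨_, hne⟩ from dif_pos hne]
    intro i b hb
    simp only at hb
    split_ifs at hb
    exact hb
  · rw [show I.restrict S = I from dif_neg hne]

theorem supp_restrict {S : Finset (Fin n)} {I : Adm n} (h : (I.supp ∩ S).Nonempty) :
    (I.restrict S).supp = I.supp ∩ S := by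
  ext i
  by_cases hi : i ∈ S <;> simp [mem_supp, restrict_val h, hi]

theorem restrict_monotoneOn (S : Finset (Fin n)) :
    MonotoneOn (restrict S) {I | (I.supp ∩ S).Nonempty} := by
  intro I hI J hJ hIJ i b hb
  rw [restrict_val hI] at hb
  rw [restrict_val hJ]
  split_ifs at hb ⊢
  exact hIJ i b hb

theorem restrict_eq_self {S : Finset (Fin n)} {I : Adm n} (h : I.supp ⊆ S) :
    I.restrict S = I := by
  have hne : (I.supp ∩ S).Nonempty := by
    rw [inter_eq_left.2 h]
    obtain ⟨i, hi⟩ := Function.ne_iff.1 I.2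
    exact ⟨i, mem_supp.2 hi⟩
  refine le_antisymm (restrict_le S I) fun i b hb => ?_
  rw [restrict_val hne, if_pos (h (mem_supp.2 (by simp [hb])))]
  exact hb

end Adm

theorem KBnS_homotopyEquiv_deleted_general (n : ℕ) (S : Finset (Fin n)) :
    Nonempty (ContinuousMap.HomotopyEquiv
      ↥(realization (chainComplex fun I : Adm n => Odd (I.supp ∩ S).card))
      ↥(realization (chainComplex fun I : Adm n =>
          Odd (I.supp ∩ S).card ∧ I.supp ⊆ S))) := by
  have hS : ∀ I : Adm n, Odd (I.supp ∩ S).card → (I.supp ∩ S).Nonempty :=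
    fun I h => card_pos.1 h.pos
  have hmono : MonotoneOn (Adm.restrict S) {I | Odd (I.supp ∩ S).card} :=
    (Adm.restrict_monotoneOn S).mono fun I h => hS I h
  refine nonempty_homotopyEquiv_of_retraction (fun I h => h.1) (fun I h => ?_)
    (fun I h => Adm.restrict_eq_self h.2) (fun I _ => Adm.restrict_le S I) hmono
  rw [Adm.supp_restrict (hS I h), inter_assoc, inter_self]
  exact ⟨h, inter_subset_right⟩

/-- For `n ≥ 3` and `S ⊆ [n]`, the subcomplex `(K_{B_n})_S` of `K_{B_n}`
(the full subcomplex on the admissible subsets `I` of `[±n]` with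
`|I^± ∩ S|` odd, where `I^± = (I ∪ -I) ∩ [n]`) is homotopy equivalent to the
full subcomplex `(K_{B_n})'_S` obtained from it by deleting all vertices `I`
with `I^± ⊄ S`. -/
theorem KBnS_homotopyEquiv_deleted (n : ℕ) (hn : 3 ≤ n) (S : Finset (Fin n)) :
    Nonempty (ContinuousMap.HomotopyEquiv
      ↥(realization (chainComplex fun I : Adm n => Odd (I.supp ∩ S).card))
      ↥(realization (chainComplex fun I : Adm n =>
          Odd (I.supp ∩ S).card ∧ I.supp ⊆ S))) :=
  KBnS_homotopyEquiv_deleted_general n S
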